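/- arXiv:2602.21674 — 2 statements merged into one kernel-verified Lean document; each statement's English description precedes it below -/
import Mathlib

section
/- Let H be an e-persistent Mealy machine and T a test suite that is complete for H with respect to a fault domain C. Then the e-persistent test suite T_e, obtained by truncating each word σ ∈ T at position firstError(H,σ)+1 when the output of H on σ first becomes e at position firstError(H,σ)+1 (and leaving σ unchanged otherwise), is complete for H with respect to the subdomain C_e of e-persistent machines in C. That is, for every e-persistent M ∈ C, if H and M produce equal outputs on every word of T_e, then H and M are equivalent. -/
structure Mealy (I O : Type) where
  Q : Type
  q0 : Q
  trans : Q → I → Q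
  out1 : Q → I → O

namespace Mealy

variable {I O : Type}

def run (M : Mealy I O) : M.Q → List I → M.Q
  | q, [] => q
  | q, i :: σ => M.run (M.trans q i) σ

def out (M : Mealy I O) : M.Q → List I → List O
  | _, [] => []
  | q, i :: σ => M.out1 q i :: M.out (M.trans q i) σ

/-- `M` is `e`-persistent: once the output word ends in `e`, appending any
input keeps the last output equal to `e`. -/
def EPersistent (M : Mealy I O) (e : O) : Prop :=
  ∀ (σ : List I) (i : I),
    (M.out M.q0 σ).getLast? = some e →
    (M.out M.q0 (σ ++ [i])).getLast? = some e

end Mealy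

/-- `i` is the position of the first error of `H` on `σ`: the `i`-th output
symbol is not `e`, the `(i+1)`-th is `e`, and no earlier index has this
property. -/
def FirstError {I O : Type} (H : Mealy I O) (e : O) (σ : List I) (i : ℕ) : Prop :=
  (H.out H.q0 σ)[i]? ≠ some e ∧ (H.out H.q0 σ)[i + 1]? = some e ∧
    ∀ j < i, ¬ ((H.out H.q0 σ)[j]? ≠ some e ∧ (H.out H.q0 σ)[j + 1]? = some e)

/-- The `e`-persistent test suite: each word of `T` is truncated to its first
`i+2` symbols when the output of `H` first becomes `e` at position `i+1`, and
left unchanged otherwise. -/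
def feSet {I O : Type} (H : Mealy I O) (e : O) (T : Set (List I)) : Set (List I) :=
  { τ | ∃ σ ∈ T,
      (∃ i : ℕ, FirstError H e σ i ∧ τ = σ.take (i + 2)) ∨
      ((¬ ∃ i : ℕ, FirstError H e σ i) ∧ τ = σ) }

/-- `T` is a complete test suite for `H` w.r.t. the fault domain `C`. -/
def TestComplete {I O : Type} (H : Mealy I O) (T : Set (List I))
    (C : Set (Mealy I O)) : Prop :=
  ∀ M ∈ C, (∀ σ ∈ T, H.out H.q0 σ = M.out M.q0 σ) →
    ∀ σ : List I, H.out H.q0 σ = M.out M.q0 σ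

namespace Mealy

variable {I O : Type} {M : Mealy I O} {e : O}

@[simp]
theorem length_out (M : Mealy I O) (q : M.Q) (σ : List I) :
    (M.out q σ).length = σ.length := by
  induction σ generalizing q with
  | nil => rfl
  | cons i σ ih => simp [out, ih]

theorem out_take (M : Mealy I O) (q : M.Q) (σ : List I) (n : ℕ) :
    M.out q (σ.take n) = (M.out q σ).take n := by
  induction σ generalizing q n with
  | nil => simp [out]
  | cons i σ ih =>
    cases n with
    | zero => simp [out]
    | succ n => simp [out, ih]

theorem getElem?_out_eq_getLast?_out_take (M : Mealy I O) (q : M.Q) {σ : List I} {k : ℕ}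
    (hk : k < σ.length) : (M.out q σ)[k]? = (M.out q (σ.take (k + 1))).getLast? := by
  have hk' : k < (M.out q σ).length := by simpa using hk
  simp [out_take, List.getLast?_take, List.getElem?_eq_getElem hk']

theorem EPersistent.getElem?_out_of_le (hM : M.EPersistent e) {σ : List I} {n k : ℕ}
    (hn : (M.out M.q0 σ)[n]? = some e) (hnk : n ≤ k) (hk : k < σ.length) :
    (M.out M.q0 σ)[k]? = some e := by
  induction k, hnk using Nat.le_induction with
  | base => exact hn
  | succ k _ ih =>
    rw [getElem?_out_eq_getLast?_out_take M _ hk, ← List.take_concat_get' σ (k + 1) hk]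
    have hk' : k < σ.length := by omega
    exact hM _ _ (getElem?_out_eq_getLast?_out_take M _ hk' ▸ ih hk')

/-- Beyond position `n` both machines output only `e`. -/
theorem EPersistent.out_eq_of_out_take_eq {H : Mealy I O} (hH : H.EPersistent e)
    (hM : M.EPersistent e) {σ : List I} {n : ℕ} (hn : (H.out H.q0 σ)[n]? = some e)
    (hagree : H.out H.q0 (σ.take (n + 1)) = M.out M.q0 (σ.take (n + 1))) :
    H.out H.q0 σ = M.out M.q0 σ := by
  rw [out_take, out_take] at hagree
  have hprefix : ∀ k ≤ n, (H.out H.q0 σ)[k]? = (M.out M.q0 σ)[k]? := fun k hk => by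
    rw [← List.getElem?_take_of_lt (Nat.lt_succ_of_le hk), hagree,
      List.getElem?_take_of_lt (Nat.lt_succ_of_le hk)]
  apply List.ext_getElem?
  intro k
  rcases le_or_gt k n with hkn | hnk
  · exact hprefix k hkn
  rcases lt_or_ge k σ.length with hk | hk
  · rw [hH.getElem?_out_of_le hn hnk.le hk,
      hM.getElem?_out_of_le (hprefix n le_rfl ▸ hn) hnk.le hk]
  · rw [List.getElem?_eq_none (by simpa using hk), List.getElem?_eq_none (by simpa using hk)]

end Mealy

/-- If `H` is `e`-persistent and `T` is complete for `H` w.r.t. `C`, then the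
`e`-persistent test suite `T_e` is complete for `H` w.r.t. the subdomain of
`e`-persistent machines in `C`. -/
theorem stmt2 {I O : Type} (H : Mealy I O) (e : O)
    (T : Set (List I)) (C : Set (Mealy I O))
    (hH : H.EPersistent e)
    (hT : TestComplete H T C) :
    TestComplete H (feSet H e T) {M | M ∈ C ∧ M.EPersistent e} := by
  rintro M ⟨hMC, hMe⟩ hagree
  refine hT M hMC fun σ hσ => ?_
  by_cases hfe : ∃ i, FirstError H e σ i
  · obtain ⟨i, hi⟩ := hfe
    exact hH.out_eq_of_out_take_eq hMe hi.2.1 (hagree _ ⟨σ, hσ, Or.inl ⟨i, hi, rfl⟩⟩)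
  · exact hagree σ ⟨σ, hσ, Or.inr ⟨hfe, rfl⟩⟩
end

section
/- Suppose L is a sound reference for Mealy machine M (every word outside L produces an output ending in e in M), H is a Mealy machine such that H and M agree on all words of L, and H sends every word outside L to an output ending in e (in particular all words outside L yield output e in both machines at their final positions, and both machines are e-persistent). Then H and M are equivalent, i.e., λ^H(σ) = λ^M(σ) for all σ ∈ I*. -/
/-! The output word of a Mealy machine on `σ` is the list of its last output letters on the
nonempty prefixes of `σ`, so two machines are equivalent as soon as their last output letters
agree on every word. Inside `L` they agree by `L`-equivalence, outside `L` both are `e` by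
soundness. -/

namespace Mealy

variable {I O : Type}

theorem out_append (M : Mealy I O) :
    ∀ (q : M.Q) (σ τ : List I), M.out q (σ ++ τ) = M.out q σ ++ M.out (M.run q σ) τ
  | _, [], _ => rfl
  | q, i :: σ, τ => by simp [out, run, out_append M _ σ τ]

theorem out_append_singleton (M : Mealy I O) (q : M.Q) (σ : List I) (i : I) :
    M.out q (σ ++ [i]) = M.out q σ ++ [M.out1 (M.run q σ) i] := by
  rw [out_append]; rfl

theorem out_eq_of_getLast?_out_eq (H M : Mealy I O) (p : H.Q) (q : M.Q)
    (h : ∀ σ, (H.out p σ).getLast? = (M.out q σ).getLast?) (σ : List I) :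
    H.out p σ = M.out q σ := by
  induction σ using List.reverseRecOn with
  | nil => rfl
  | append_singleton σ i ih =>
    have hlast := h (σ ++ [i])
    rw [out_append_singleton, out_append_singleton, List.getLast?_concat,
      List.getLast?_concat, Option.some_inj] at hlast
    rw [out_append_singleton, out_append_singleton, ih, hlast]

end Mealy

theorem stmt6_general {I O : Type} (H M : Mealy I O) (e : O) (L : Set (List I))
    (hsoundH : ∀ σ ∉ L, (H.out H.q0 σ).getLast? = some e)
    (hsoundM : ∀ σ ∉ L, (M.out M.q0 σ).getLast? = some e)
    (hagree : ∀ σ ∈ L, H.out H.q0 σ = M.out M.q0 σ) :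
    ∀ σ : List I, H.out H.q0 σ = M.out M.q0 σ := by
  refine Mealy.out_eq_of_getLast?_out_eq H M H.q0 M.q0 fun σ => ?_
  by_cases hσ : σ ∈ L
  · rw [hagree σ hσ]
  · rw [hsoundH σ hσ, hsoundM σ hσ]

/-- If `L` is an `e`-persistent reference that is sound for both the
`e`-persistent machines `H` and `M`, and `H` and `M` are `L`-equivalent, then
`H` and `M` are equivalent on all input words. -/
theorem stmt6 {I O : Type} (H M : Mealy I O) (e : O) (L : Set (List I))
    (hLpers : ∀ (σ : List I) (i : I), σ ∉ L → σ ++ [i] ∉ L)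
    (hHpers : H.EPersistent e) (hMpers : M.EPersistent e)
    (hsoundH : ∀ σ ∉ L, (H.out H.q0 σ).getLast? = some e)
    (hsoundM : ∀ σ ∉ L, (M.out M.q0 σ).getLast? = some e)
    (hagree : ∀ σ ∈ L, H.out H.q0 σ = M.out M.q0 σ) :
    ∀ σ : List I, H.out H.q0 σ = M.out M.q0 σ :=
  stmt6_general H M e L hsoundH hsoundM hagree
end
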